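/- Let K be a positive integer, j ≥ 0 an integer, and a, b, a', b' real numbers, and set Δa := 2πK(a − a') and Δb := 2πK²(b − b'). Then the series Σ_{r=0}^{∞} (i^r/r!) Σ_{l=0}^{r} C(r,l) · F(K, j+2r−l; a', b') · (Δa)^l (Δb)^{r−l} converges absolutely to F(K,j;a,b). Moreover, if |Δa| ≤ π and |Δb| ≤ π, then for every r ≥ 0 the r-th term satisfies |(i^r/r!) Σ_{l=0}^{r} C(r,l) F(K, j+2r−l; a', b') (Δa)^l (Δb)^{r−l}| ≤ (K+1)·(2π)^r / r!. -/

import Mathlib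

/-- The quadratic exponential sum `F(K,j;a,b)`. -/
noncomputable def Fquad (K j : ℕ) (a b : ℝ) : ℂ :=
  1 / (K : ℂ) ^ j * ∑ k ∈ Finset.range (K + 1),
    (k : ℂ) ^ j *
      Complex.exp (2 * Real.pi * Complex.I * ((a * k + b * k ^ 2 : ℝ) : ℂ))

/-!
With `t_k = k/K`, the sum `F(K,j;a,b)` is `∑_{k ≤ K} t_k^j e(a'k + b'k²) exp(i(Δa t_k + Δb t_k²))`,
where `e(x) = exp(2πix)`.
Expanding each exponential into its power series and `(Δa t + Δb t²)^r` by the binomial theorem,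
the powers of `t_k` recombine into the sums `F(K, j + 2r - l; a', b')`. A finite sum of exponential
series converges absolutely, and since `0 ≤ t_k ≤ 1` the `k`-th summand of the `r`-th term has
modulus at most `(|Δa| + |Δb|)^r / r!`.
-/

open Complex Finset

section ExpSeries

variable {ι : Type*} (s : Finset ι) (c z : ι → ℂ)

lemma hasSum_sum_mul_pow_div_factorial :
    HasSum (fun r : ℕ => ∑ k ∈ s, c k * z k ^ r / r.factorial) (∑ k ∈ s, c k * exp (z k)) :=
  hasSum_sum fun k _ => by
    simpa only [mul_div_assoc, Complex.exp_eq_exp_ℂ] using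
      (NormedSpace.expSeries_div_hasSum_exp (z k)).mul_left (c k)

lemma norm_sum_mul_pow_div_factorial_le (r : ℕ) :
    ‖∑ k ∈ s, c k * z k ^ r / r.factorial‖ ≤ ∑ k ∈ s, ‖c k‖ * ‖z k‖ ^ r / r.factorial := by
  refine (norm_sum_le _ _).trans (le_of_eq (sum_congr rfl fun k _ => ?_))
  rw [norm_div, norm_mul, norm_pow, norm_natCast]

lemma summable_norm_sum_mul_pow_div_factorial :
    Summable fun r : ℕ => ‖∑ k ∈ s, c k * z k ^ r / r.factorial‖ :=
  .of_nonneg_of_le (fun _ => norm_nonneg _) (norm_sum_mul_pow_div_factorial_le s c z)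
    (summable_sum fun k _ => by
      simpa only [mul_div_assoc] using (Real.summable_pow_div_factorial ‖z k‖).mul_left ‖c k‖)

lemma norm_sum_mul_pow_div_factorial_le_card {R : ℝ} (hc : ∀ k ∈ s, ‖c k‖ ≤ 1)
    (hz : ∀ k ∈ s, ‖z k‖ ≤ R) (r : ℕ) :
    ‖∑ k ∈ s, c k * z k ^ r / r.factorial‖ ≤ #s * R ^ r / r.factorial :=
  calc _ ≤ ∑ k ∈ s, ‖c k‖ * ‖z k‖ ^ r / r.factorial := norm_sum_mul_pow_div_factorial_le s c z r
    _ ≤ ∑ _k ∈ s, 1 * R ^ r / r.factorial := by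
      gcongr with k hk
      exacts [hc k hk, hz k hk]
    _ = #s * R ^ r / r.factorial := by rw [sum_const, nsmul_eq_mul, one_mul, mul_div_assoc]

end ExpSeries

lemma add_mul_add_mul_sq_pow {R : Type*} [CommSemiring R] (α β t : R) (r : ℕ) :
    (α * t + β * t ^ 2) ^ r =
      ∑ l ∈ range (r + 1), (r.choose l : R) * t ^ (2 * r - l) * α ^ l * β ^ (r - l) := by
  rw [add_pow]
  refine sum_congr rfl fun l hl => ?_
  have hl : l ≤ r := mem_range_succ_iff.mp hl
  rw [show 2 * r - l = l + 2 * (r - l) by omega, pow_add, pow_mul, mul_pow, mul_pow]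
  ring

lemma norm_natCast_div_natCast_le_one {k K : ℕ} (hk : k ≤ K) : ‖(k : ℂ) / K‖ ≤ 1 := by
  rw [norm_div, norm_natCast, norm_natCast]
  exact div_le_one_of_le₀ (by exact_mod_cast hk) K.cast_nonneg

lemma natCast_mul_natCast_div_natCast {k K : ℕ} (hk : k ≤ K) : (K : ℂ) * (k / K) = k := by
  rcases K.eq_zero_or_pos with rfl | hK
  · simp [Nat.le_zero.mp hk]
  · exact mul_div_cancel₀ _ (Nat.cast_ne_zero.mpr hK.ne')

namespace Fquad

noncomputable def summand (K j : ℕ) (a b : ℝ) (k : ℕ) : ℂ :=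
  ((k : ℂ) / K) ^ j * exp (2 * Real.pi * I * ((a * k + b * k ^ 2 : ℝ) : ℂ))

noncomputable def phase (K : ℕ) (Δa Δb : ℝ) (k : ℕ) : ℂ :=
  I * (Δa * ((k : ℂ) / K) + Δb * ((k : ℂ) / K) ^ 2)

lemma eq_sum_summand (K j : ℕ) (a b : ℝ) :
    Fquad K j a b = ∑ k ∈ range (K + 1), summand K j a b k := by
  rw [Fquad, mul_sum]
  exact sum_congr rfl fun k _ => by rw [summand, div_pow]; ring

lemma summand_add (K j n : ℕ) (a b : ℝ) (k : ℕ) :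
    summand K (j + n) a b k = summand K j a b k * ((k : ℂ) / K) ^ n := by
  rw [summand, summand, pow_add]
  ring

lemma norm_summand_le_one {K k : ℕ} (hk : k ≤ K) (j : ℕ) (a b : ℝ) : ‖summand K j a b k‖ ≤ 1 := by
  rw [summand, norm_mul, norm_pow, ← ofReal_ofNat, ← ofReal_mul,
    show ((2 * Real.pi : ℝ) : ℂ) * I * ((a * k + b * k ^ 2 : ℝ) : ℂ) =
      ((2 * Real.pi * (a * k + b * k ^ 2) : ℝ) : ℂ) * I by push_cast; ring,
    norm_exp_ofReal_mul_I, mul_one]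
  exact pow_le_one₀ (norm_nonneg _) (norm_natCast_div_natCast_le_one hk)

lemma norm_phase_le {K k : ℕ} (hk : k ≤ K) (Δa Δb : ℝ) :
    ‖phase K Δa Δb k‖ ≤ |Δa| + |Δb| := by
  have ht := norm_natCast_div_natCast_le_one hk
  calc ‖phase K Δa Δb k‖
      ≤ |Δa| * ‖(k : ℂ) / K‖ + |Δb| * ‖(k : ℂ) / K‖ ^ 2 := by
        rw [phase, norm_mul, norm_I, one_mul]
        refine (norm_add_le _ _).trans_eq ?_
        rw [norm_mul, norm_mul, norm_pow, norm_real, norm_real, Real.norm_eq_abs,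
          Real.norm_eq_abs]
    _ ≤ |Δa| * 1 + |Δb| * 1 := by
        gcongr
        exact pow_le_one₀ (norm_nonneg _) ht
    _ = |Δa| + |Δb| := by ring

lemma summand_mul_exp_phase {K k : ℕ} (hk : k ≤ K) (j : ℕ) {a b a' b' Δa Δb : ℝ}
    (hΔa : Δa = 2 * Real.pi * K * (a - a')) (hΔb : Δb = 2 * Real.pi * K ^ 2 * (b - b')) :
    summand K j a' b' k * exp (phase K Δa Δb k) = summand K j a b k := by
  have hK := natCast_mul_natCast_div_natCast hk
  rw [summand, summand, mul_assoc, ← exp_add, phase]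
  congr 2
  subst hΔa hΔb
  push_cast
  linear_combination
    (2 * Real.pi * I * (a - a') + 2 * Real.pi * I * (b - b') * (K * (k / K) + k)) * hK

lemma taylor_term_eq (K j : ℕ) (a' b' Δa Δb : ℝ) (r : ℕ) :
    I ^ r / (r.factorial : ℂ) *
        ∑ l ∈ range (r + 1), (r.choose l : ℂ) * Fquad K (j + 2 * r - l) a' b' *
          ((Δa : ℝ) : ℂ) ^ l * ((Δb : ℝ) : ℂ) ^ (r - l) =
      ∑ k ∈ range (K + 1), summand K j a' b' k * phase K Δa Δb k ^ r / r.factorial := by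
  simp only [phase, mul_pow, add_mul_add_mul_sq_pow, eq_sum_summand, mul_sum, sum_mul, sum_div]
  rw [sum_comm]
  refine sum_congr rfl fun k _ => sum_congr rfl fun l hl => ?_
  have hl : l ≤ 2 * r := by have := mem_range.mp hl; omega
  rw [Nat.add_sub_assoc hl, summand_add]
  ring

end Fquad

theorem Fquad_taylor_expansion_general (K : ℕ) (j : ℕ) (a b a' b' : ℝ)
    (Δa Δb : ℝ) (hΔa : Δa = 2 * Real.pi * K * (a - a'))
    (hΔb : Δb = 2 * Real.pi * K ^ 2 * (b - b')) :
    (Summable fun r : ℕ =>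
      ‖Complex.I ^ r / (r.factorial : ℂ) *
        ∑ l ∈ Finset.range (r + 1), (r.choose l : ℂ) * Fquad K (j + 2 * r - l) a' b' *
          ((Δa : ℝ) : ℂ) ^ l * ((Δb : ℝ) : ℂ) ^ (r - l)‖) ∧
    HasSum
      (fun r : ℕ =>
        Complex.I ^ r / (r.factorial : ℂ) *
          ∑ l ∈ Finset.range (r + 1), (r.choose l : ℂ) * Fquad K (j + 2 * r - l) a' b' *
            ((Δa : ℝ) : ℂ) ^ l * ((Δb : ℝ) : ℂ) ^ (r - l))
      (Fquad K j a b) ∧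
    (|Δa| ≤ Real.pi → |Δb| ≤ Real.pi → ∀ r : ℕ,
      ‖Complex.I ^ r / (r.factorial : ℂ) *
          ∑ l ∈ Finset.range (r + 1), (r.choose l : ℂ) * Fquad K (j + 2 * r - l) a' b' *
            ((Δa : ℝ) : ℂ) ^ l * ((Δb : ℝ) : ℂ) ^ (r - l)‖ ≤
        ((K : ℝ) + 1) * (2 * Real.pi) ^ r / (r.factorial : ℝ)) := by
  have hF : Fquad K j a b =
      ∑ k ∈ range (K + 1), Fquad.summand K j a' b' k * exp (Fquad.phase K Δa Δb k) := by
    rw [Fquad.eq_sum_summand]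
    exact sum_congr rfl fun k hk =>
      (Fquad.summand_mul_exp_phase (mem_range_succ_iff.mp hk) j hΔa hΔb).symm
  simp only [Fquad.taylor_term_eq]
  refine ⟨summable_norm_sum_mul_pow_div_factorial _ _ _,
    hF ▸ hasSum_sum_mul_pow_div_factorial _ _ _, fun ha hb r => ?_⟩
  calc _ ≤ #(range (K + 1)) * (|Δa| + |Δb|) ^ r / r.factorial :=
        norm_sum_mul_pow_div_factorial_le_card _ _ _
          (fun k hk => Fquad.norm_summand_le_one (mem_range_succ_iff.mp hk) j a' b')
          (fun k hk => Fquad.norm_phase_le (mem_range_succ_iff.mp hk) Δa Δb) r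
    _ ≤ ((K : ℝ) + 1) * (2 * Real.pi) ^ r / r.factorial := by
        rw [card_range, Nat.cast_succ]
        gcongr
        linarith

/-- The Taylor expansion (2.11) of `F(K,j;a,b)` about a reference point `(a',b')`:
the series converges absolutely to `F(K,j;a,b)`, and when `|Δa|, |Δb| ≤ π` the
`r`-th term is bounded by `(K+1)(2π)^r/r!`. -/
theorem Fquad_taylor_expansion (K : ℕ) (hK : 0 < K) (j : ℕ) (a b a' b' : ℝ)
    (Δa Δb : ℝ) (hΔa : Δa = 2 * Real.pi * K * (a - a'))
    (hΔb : Δb = 2 * Real.pi * K ^ 2 * (b - b')) :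
    (Summable fun r : ℕ =>
      ‖Complex.I ^ r / (r.factorial : ℂ) *
        ∑ l ∈ Finset.range (r + 1), (r.choose l : ℂ) * Fquad K (j + 2 * r - l) a' b' *
          ((Δa : ℝ) : ℂ) ^ l * ((Δb : ℝ) : ℂ) ^ (r - l)‖) ∧
    HasSum
      (fun r : ℕ =>
        Complex.I ^ r / (r.factorial : ℂ) *
          ∑ l ∈ Finset.range (r + 1), (r.choose l : ℂ) * Fquad K (j + 2 * r - l) a' b' *
            ((Δa : ℝ) : ℂ) ^ l * ((Δb : ℝ) : ℂ) ^ (r - l))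
      (Fquad K j a b) ∧
    (|Δa| ≤ Real.pi → |Δb| ≤ Real.pi → ∀ r : ℕ,
      ‖Complex.I ^ r / (r.factorial : ℂ) *
          ∑ l ∈ Finset.range (r + 1), (r.choose l : ℂ) * Fquad K (j + 2 * r - l) a' b' *
            ((Δa : ℝ) : ℂ) ^ l * ((Δb : ℝ) : ℂ) ^ (r - l)‖ ≤
        ((K : ℝ) + 1) * (2 * Real.pi) ^ r / (r.factorial : ℝ)) :=
  Fquad_taylor_expansion_general K j a b a' b' Δa Δb hΔa hΔb
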